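/- Let n, f, k be nonnegative integers with n > 3f and n > 2f. Consider an n×n 0/1 matrix in which every row contains exactly n−f ones. If k is the number of columns containing at least 2f+1 ones, then k ≥ n(n−3f)/(n−2f). -/
import Mathlib


theorem stmt_0 (n f : ℕ) (h3 : 3 * f < n) (h2 : 2 * f < n)
    (M : Fin n → Fin n → Bool)
    (hrow : ∀ i : Fin n, (Finset.univ.filter (fun j => M i j = true)).card = n - f)
    (k : ℕ)
    (hk : k = (Finset.univ.filter
      (fun j : Fin n => 2 * f + 1 ≤ (Finset.univ.filter (fun i => M i j = true)).card)).card) :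
    (n : ℝ) * ((n : ℝ) - 3 * f) / ((n : ℝ) - 2 * f) ≤ (k : ℝ) := by
  classical
  set c : Fin n → ℕ := fun j => (Finset.univ.filter (fun i => M i j = true)).card with hc
  set S : Finset (Fin n) := Finset.univ.filter (fun j : Fin n => 2 * f + 1 ≤ c j) with hS
  have hsum : ∑ j, c j = n * (n - f) := by
    have h1 : ∀ j, c j = ∑ i : Fin n, (if M i j = true then 1 else 0) := by
      intro j; exact Finset.card_filter _ _
    calc ∑ j, c j = ∑ j : Fin n, ∑ i : Fin n, (if M i j = true then 1 else 0) := by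
          simp [h1]
      _ = ∑ i : Fin n, ∑ j : Fin n, (if M i j = true then 1 else 0) := Finset.sum_comm
      _ = ∑ i : Fin n, (n - f) := by
          refine Finset.sum_congr rfl fun i _ => ?_
          rw [← Finset.card_filter, hrow i]
      _ = n * (n - f) := by simp [mul_comm]
  have hkS : k = S.card := by rw [hk, hS]
  have hkn : k ≤ n := by rw [hkS]; simpa using Finset.card_le_card (Finset.subset_univ S)
  have hbound : ∑ j, c j ≤ k * n + (n - k) * (2 * f) := by
    rw [← Finset.sum_filter_add_sum_filter_not Finset.univ (fun j : Fin n => 2 * f + 1 ≤ c j)]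
    have hA : ∑ j ∈ S, c j ≤ k * n := by
      calc ∑ j ∈ S, c j ≤ ∑ j ∈ S, n := by
            refine Finset.sum_le_sum fun j _ => ?_
            simpa [hc] using Finset.card_le_card (Finset.subset_univ _) |>.trans (by simp)
        _ = k * n := by rw [Finset.sum_const, hkS, smul_eq_mul]
    have hB : ∑ j ∈ Finset.univ.filter (fun j : Fin n => ¬ (2 * f + 1 ≤ c j)), c j
        ≤ (n - k) * (2 * f) := by
      have hcard : (Finset.univ.filter (fun j : Fin n => ¬ (2 * f + 1 ≤ c j))).card = n - k := by
        rw [Finset.filter_not, Finset.card_sdiff_of_subset (Finset.filter_subset _ _)]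
        simp [hkS, hS]
      calc ∑ j ∈ Finset.univ.filter (fun j : Fin n => ¬ (2 * f + 1 ≤ c j)), c j
          ≤ ∑ j ∈ Finset.univ.filter (fun j : Fin n => ¬ (2 * f + 1 ≤ c j)), 2 * f := by
            refine Finset.sum_le_sum fun j hj => ?_
            simp only [Finset.mem_filter, not_le] at hj
            omega
        _ = (n - k) * (2 * f) := by rw [Finset.sum_const, hcard, smul_eq_mul]
    exact Nat.add_le_add hA hB
  have hmain : n * (n - f) ≤ k * n + (n - k) * (2 * f) := hsum ▸ hbound
  have hfn : f ≤ n := by omega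
  have hR : (n : ℝ) * ((n : ℝ) - f) ≤ k * n + ((n : ℝ) - k) * (2 * f) := by
    have := (Nat.cast_le (α := ℝ)).mpr hmain
    push_cast [Nat.sub_add_cancel, hfn, hkn] at this ⊢
    exact this
  have hpos : (0 : ℝ) < (n : ℝ) - 2 * f := by
    have : (2 * f : ℕ) < n := h2
    have := (Nat.cast_lt (α := ℝ)).mpr this
    push_cast at this; linarith
  rw [div_le_iff₀ hpos]
  nlinarith [hR]
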